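/- Let (q(t),v(t)) be a solution of the Kepler equations on S³ lying in TS³ with 0 < q0(t) < 1, 𝐪(t) ≠ 0 and E < 0, and set (x(t),y(t)) = Φ(q(t),v(t)) where Φ is the Ligon–Schaaf map with phase φ = (𝐪·𝛑)/(νq0). Then dx/dt = (1/q0²)·γ²y/⟨y,y⟩² and dy/dt = −(1/q0²)·γ²x/⟨y,y⟩; i.e., Φ maps the Kepler vector field X_H to (1/q0²) times the Delaunay vector field X_ℋ, so the two vector fields are C^∞-equivalent with time reparametrization τ(t) = ∫_{t0}^{t} ds/q0(s)². -/

import Mathlib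

open Matrix Real

noncomputable section

/-- The spatial (last three) components of a vector in `ℝ⁴`. -/
def sp (q : Fin 4 → ℝ) : Fin 3 → ℝ := fun i => q i.succ

/-- The Euclidean norm on `ℝ³`, written via the dot product. -/
def nrm3 (x : Fin 3 → ℝ) : ℝ := Real.sqrt (x ⬝ᵥ x)

/-- The first standard basis vector `e₀ = (1,0,0,0)` of `ℝ⁴`. -/
def e0 : Fin 4 → ℝ := fun i => if i = 0 then 1 else 0

/-- The (constraint set defining the) tangent bundle `TS³ ⊂ ℝ⁴ × ℝ⁴`. -/
def TS3 : Set ((Fin 4 → ℝ) × (Fin 4 → ℝ)) :=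
  {p | p.1 ⬝ᵥ p.1 = 1 ∧ p.1 ⬝ᵥ p.2 = 0}

/-- Right hand side of the Kepler equations of motion on `S³`:
`v̇ = γ e₀/(1-q₀²)^{3/2} - (⟨v,v⟩ + γ q₀/(1-q₀²)^{3/2}) q`. -/
def keplerRHS (γ : ℝ) (q v : Fin 4 → ℝ) : Fin 4 → ℝ :=
  (γ / (1 - q 0 ^ 2) ^ ((3 : ℝ) / 2)) • e0
    - (v ⬝ᵥ v + γ * q 0 / (1 - q 0 ^ 2) ^ ((3 : ℝ) / 2)) • q

/-- The Kepler Hamiltonian on `S³`: `H = ½⟨v,v⟩ - γ q₀ / (1-q₀²)^{1/2}`. -/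
def Hham (γ : ℝ) (p : (Fin 4 → ℝ) × (Fin 4 → ℝ)) : ℝ :=
  (1 / 2) * (p.2 ⬝ᵥ p.2) - γ * p.1 0 / Real.sqrt (1 - p.1 0 ^ 2)

/-- The angular momentum `𝛍 = 𝐪 × 𝐯`. -/
def mu (p : (Fin 4 → ℝ) × (Fin 4 → ℝ)) : Fin 3 → ℝ :=
  crossProduct (sp p.1) (sp p.2)

/-- The vector `𝛑 = q₀ 𝐯 - v₀ 𝐪`. -/
def pivec (p : (Fin 4 → ℝ) × (Fin 4 → ℝ)) : Fin 3 → ℝ :=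
  p.1 0 • sp p.2 - p.2 0 • sp p.1

/-- The Runge–Lenz vector `𝐀 = 𝛑 × 𝛍 - γ 𝐪/|𝐪|`. -/
def rl (γ : ℝ) (p : (Fin 4 → ℝ) × (Fin 4 → ℝ)) : Fin 3 → ℝ :=
  crossProduct (pivec p) (mu p) - (γ / nrm3 (sp p.1)) • sp p.1

/-- The energy-like integral `E = H - |𝛍|²/2`. -/
def Een (γ : ℝ) (p : (Fin 4 → ℝ) × (Fin 4 → ℝ)) : ℝ :=
  Hham γ p - (mu p ⬝ᵥ mu p) / 2

/-- `ν = γ / √(-2E)`. -/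
def nuLS (γ : ℝ) (p : (Fin 4 → ℝ) × (Fin 4 → ℝ)) : ℝ :=
  γ / Real.sqrt (-2 * Een γ p)


/-- The vector `α` of the Ligon–Schaaf map for the Kepler problem on `S³`. -/
def alphaLS (γ : ℝ) (p : (Fin 4 → ℝ) × (Fin 4 → ℝ)) : Fin 4 → ℝ :=
  Fin.cons ((sp p.1 ⬝ᵥ pivec p) / (nuLS γ p * p.1 0))
    ((nrm3 (sp p.1))⁻¹ • sp p.1 - ((sp p.1 ⬝ᵥ pivec p) / (γ * p.1 0)) • pivec p)

/-- The vector `β` of the Ligon–Schaaf map for the Kepler problem on `S³`. -/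
def betaLS (γ : ℝ) (p : (Fin 4 → ℝ) × (Fin 4 → ℝ)) : Fin 4 → ℝ :=
  Fin.cons (nrm3 (sp p.1) / (γ * p.1 0) * (pivec p ⬝ᵥ pivec p) - 1)
    ((nrm3 (sp p.1) / (nuLS γ p * p.1 0)) • pivec p)

/-- The phase `φ = (𝐪·𝛑)/(ν q₀) = α₀` of the Ligon–Schaaf map. -/
def phiLS (γ : ℝ) (p : (Fin 4 → ℝ) × (Fin 4 → ℝ)) : ℝ :=
  (sp p.1 ⬝ᵥ pivec p) / (nuLS γ p * p.1 0)

/-- The Ligon–Schaaf map `Φ` for the Kepler problem on `S³`. -/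
def PhiLS (γ : ℝ) (p : (Fin 4 → ℝ) × (Fin 4 → ℝ)) : (Fin 4 → ℝ) × (Fin 4 → ℝ) :=
  (Real.sin (phiLS γ p) • alphaLS γ p + Real.cos (phiLS γ p) • betaLS γ p,
   nuLS γ p • (-Real.cos (phiLS γ p) • alphaLS γ p + Real.sin (phiLS γ p) • betaLS γ p))

/-!
Along a Kepler orbit the angular momentum `𝐪 × 𝐯` and the energy `E = |𝛑|²/2 - γ q₀/|𝐪|` are
conserved, so `ν` is constant, and `𝛑' = -(γ/|𝐪|³) 𝐪`. Hence `α` and `β`, which are orthonormal,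
rotate into each other: `α' = ω β`, `β' = -ω α` with `ω = γ/(ν q₀ |𝐪|)`, while the phase advances
at the rate `φ' = (|𝛑|² - γ q₀/|𝐪|)/(ν q₀²)`. So `x = sin φ α + cos φ β` and `y/ν` turn in the
`(α, β)`-plane at the rate `φ' - ω = -γ²/(ν³ q₀²)`, and `⟨y, y⟩ = ν²`: this is the Delaunay
field scaled by `1/q₀²`.
-/

theorem HasDerivAt.dotProduct {n : ℕ} {f g : ℝ → Fin n → ℝ} {f' g' : Fin n → ℝ} {t : ℝ}
    (hf : HasDerivAt f f' t) (hg : HasDerivAt g g' t) :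
    HasDerivAt (fun s => f s ⬝ᵥ g s) (f' ⬝ᵥ g t + f t ⬝ᵥ g') t := by
  simp only [_root_.dotProduct, ← Finset.sum_add_distrib]
  exact HasDerivAt.fun_sum fun i _ => (hasDerivAt_pi.1 hf i).mul (hasDerivAt_pi.1 hg i)

theorem HasDerivAt.crossProduct {f g : ℝ → Fin 3 → ℝ} {f' g' : Fin 3 → ℝ} {t : ℝ}
    (hf : HasDerivAt f f' t) (hg : HasDerivAt g g' t) :
    HasDerivAt (fun s => f s ⨯₃ g s) (f' ⨯₃ g t + f t ⨯₃ g') t := by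
  have hfi := hasDerivAt_pi.1 hf
  have hgi := hasDerivAt_pi.1 hg
  simp only [cross_apply]
  refine hasDerivAt_pi.2 fun i => ?_
  fin_cases i <;>
    refine (((hfi _).mul (hgi _)).sub ((hfi _).mul (hgi _))).congr_deriv ?_ <;>
    simp only [Fin.zero_eta, Fin.mk_one, Fin.reduceFinMk, Pi.add_apply, cons_val] <;> ring

theorem finCons_dotProduct_finCons {n : ℕ} (x y : ℝ) (v w : Fin n → ℝ) :
    (Fin.cons x v : Fin (n + 1) → ℝ) ⬝ᵥ Fin.cons y w = x * y + v ⬝ᵥ w :=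
  cons_dotProduct_cons x v y w

theorem smul_finCons {n : ℕ} (c x : ℝ) (w : Fin n → ℝ) :
    c • (Fin.cons x w : Fin (n + 1) → ℝ) = Fin.cons (c * x) (c • w) :=
  smul_cons c x w

theorem rpow_three_halves_eq_sqrt_pow {x : ℝ} (hx : 0 ≤ x) : x ^ ((3 : ℝ) / 2) = √x ^ 3 := by
  rw [Real.sqrt_eq_rpow, ← Real.rpow_natCast, ← Real.rpow_mul hx]; norm_num

theorem hasDerivAt_div_sqrt_one_sub_sq {x : ℝ} (hx : x ^ 2 < 1) :
    HasDerivAt (fun y => y / √(1 - y ^ 2)) (1 / (1 - x ^ 2) ^ ((3 : ℝ) / 2)) x := by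
  have hpos : 0 < 1 - x ^ 2 := by linarith
  have h := (hasDerivAt_id' x).fun_div (((hasDerivAt_id' x).pow 2).const_sub 1 |>.sqrt hpos.ne')
    (Real.sqrt_pos.2 hpos).ne'
  refine h.congr_deriv ?_
  have hr := Real.sq_sqrt hpos.le
  simp only [Pi.pow_apply, rpow_three_halves_eq_sqrt_pow hpos.le]
  field_simp
  rw [hr]
  ring

section RotatingFrame

variable {E : Type*} [NormedAddCommGroup E] [NormedSpace ℝ E]
  {φ : ℝ → ℝ} {a b : ℝ → E} {φ' ω t : ℝ}

theorem HasDerivAt.sin_smul_add_cos_smul (hφ : HasDerivAt φ φ' t)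
    (ha : HasDerivAt a (ω • b t) t) (hb : HasDerivAt b (-ω • a t) t) :
    HasDerivAt (fun s => Real.sin (φ s) • a s + Real.cos (φ s) • b s)
      ((φ' - ω) • (Real.cos (φ t) • a t - Real.sin (φ t) • b t)) t :=
  ((hφ.sin.smul ha).add (hφ.cos.smul hb)).congr_deriv (by module)

theorem HasDerivAt.neg_cos_smul_add_sin_smul (hφ : HasDerivAt φ φ' t)
    (ha : HasDerivAt a (ω • b t) t) (hb : HasDerivAt b (-ω • a t) t) :
    HasDerivAt (fun s => -Real.cos (φ s) • a s + Real.sin (φ s) • b s)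
      ((φ' - ω) • (Real.sin (φ t) • a t + Real.cos (φ t) • b t)) t :=
  ((hφ.cos.fun_neg.smul ha).add (hφ.sin.smul hb)).congr_deriv (by module)

end RotatingFrame

theorem HasDerivAt.sp {f : ℝ → Fin 4 → ℝ} {f' : Fin 4 → ℝ} {t : ℝ} (hf : HasDerivAt f f' t) :
    HasDerivAt (fun s => _root_.sp (f s)) (_root_.sp f') t :=
  hasDerivAt_pi.2 fun i => hasDerivAt_pi.1 hf i.succ

theorem dotProduct_eq_mul_add_sp (a b : Fin 4 → ℝ) : a ⬝ᵥ b = a 0 * b 0 + sp a ⬝ᵥ sp b := by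
  simp [dotProduct, sp, Fin.sum_univ_succ]

theorem dotProduct_e0 (x : Fin 4 → ℝ) : x ⬝ᵥ e0 = x 0 := by
  simp [dotProduct, e0]

theorem nrm3_sq (x : Fin 3 → ℝ) : nrm3 x ^ 2 = x ⬝ᵥ x :=
  Real.sq_sqrt (dotProduct_self_star_nonneg x)

theorem keplerRHS_zero (γ : ℝ) (x y : Fin 4 → ℝ) :
    keplerRHS γ x y 0 = γ / (1 - x 0 ^ 2) ^ ((3 : ℝ) / 2)
      - (y ⬝ᵥ y + γ * x 0 / (1 - x 0 ^ 2) ^ ((3 : ℝ) / 2)) * x 0 := by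
  simp [keplerRHS, e0]

theorem sp_keplerRHS (γ : ℝ) (x y : Fin 4 → ℝ) :
    sp (keplerRHS γ x y) = -(y ⬝ᵥ y + γ * x 0 / (1 - x 0 ^ 2) ^ ((3 : ℝ) / 2)) • sp x := by
  ext i
  simp [keplerRHS, sp, e0, Fin.succ_ne_zero]
  ring

section PhaseSpace

variable {γ : ℝ} {p : (Fin 4 → ℝ) × (Fin 4 → ℝ)}

theorem sp_dotProduct_sp_fst (hp : p ∈ TS3) : sp p.1 ⬝ᵥ sp p.1 = 1 - p.1 0 ^ 2 := by
  linear_combination hp.1 - dotProduct_eq_mul_add_sp p.1 p.1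

theorem sp_dotProduct_sp_snd (hp : p ∈ TS3) : sp p.1 ⬝ᵥ sp p.2 = -(p.1 0 * p.2 0) := by
  linear_combination hp.2 - dotProduct_eq_mul_add_sp p.1 p.2

theorem nrm3_sp_fst (hp : p ∈ TS3) : nrm3 (sp p.1) = √(1 - p.1 0 ^ 2) := by
  rw [nrm3, sp_dotProduct_sp_fst hp]

theorem nrm3_sp_fst_pos (hp : p ∈ TS3) (hq1 : p.1 0 ^ 2 < 1) : 0 < nrm3 (sp p.1) := by
  rw [nrm3_sp_fst hp]; exact Real.sqrt_pos.2 (by linarith)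

theorem one_sub_sq_rpow_three_halves_eq_sqrt_pow (hp : p ∈ TS3) :
    (1 - p.1 0 ^ 2) ^ ((3 : ℝ) / 2) = nrm3 (sp p.1) ^ 3 := by
  rw [nrm3_sp_fst hp, rpow_three_halves_eq_sqrt_pow]
  exact sp_dotProduct_sp_fst hp ▸ dotProduct_self_star_nonneg _

theorem sp_dotProduct_pivec (hp : p ∈ TS3) : sp p.1 ⬝ᵥ pivec p = -p.2 0 := by
  simp only [pivec, dotProduct_sub, dotProduct_smul, sp_dotProduct_sp_fst hp,
    sp_dotProduct_sp_snd hp, smul_eq_mul]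
  ring

theorem sp_snd_dotProduct_pivec (hp : p ∈ TS3) :
    sp p.2 ⬝ᵥ pivec p = p.1 0 * (p.2 ⬝ᵥ p.2) := by
  simp only [pivec, dotProduct_sub, dotProduct_smul, dotProduct_comm (sp p.2) (sp p.1),
    sp_dotProduct_sp_snd hp, dotProduct_eq_mul_add_sp p.2 p.2, smul_eq_mul]
  ring

theorem pivec_dotProduct_pivec (hp : p ∈ TS3) :
    pivec p ⬝ᵥ pivec p = p.1 0 ^ 2 * (p.2 ⬝ᵥ p.2) + p.2 0 ^ 2 := by
  simp only [pivec, dotProduct_sub, sub_dotProduct, dotProduct_smul, smul_dotProduct,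
    dotProduct_comm (sp p.2) (sp p.1), sp_dotProduct_sp_fst hp, sp_dotProduct_sp_snd hp,
    dotProduct_eq_mul_add_sp p.2 p.2, smul_eq_mul]
  ring

theorem sp_snd_eq_smul_pivec_add (hq0 : p.1 0 ≠ 0) : sp p.2 = (p.1 0)⁻¹ • (pivec p + p.2 0 • sp p.1) := by
  rw [pivec, sub_add_cancel, smul_smul, inv_mul_cancel₀ hq0, one_smul]

theorem Een_eq (hp : p ∈ TS3) :
    Een γ p = pivec p ⬝ᵥ pivec p / 2 - γ * p.1 0 / nrm3 (sp p.1) := by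
  rw [Een, Hham, mu, cross_dot_cross, pivec_dotProduct_pivec hp, nrm3_sp_fst hp,
    dotProduct_comm (sp p.2) (sp p.1), sp_dotProduct_sp_fst hp, sp_dotProduct_sp_snd hp,
    dotProduct_eq_mul_add_sp p.2 p.2]
  ring

theorem nuLS_pos (hγ : 0 < γ) (hE : Een γ p < 0) : 0 < nuLS γ p :=
  div_pos hγ (Real.sqrt_pos.2 (by linarith))

theorem nuLS_sq_mul_eq (hp : p ∈ TS3) (hq1 : p.1 0 ^ 2 < 1) (hE : Een γ p < 0) :
    nuLS γ p ^ 2 * (2 * γ * p.1 0 - nrm3 (sp p.1) * (pivec p ⬝ᵥ pivec p))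
      = γ ^ 2 * nrm3 (sp p.1) := by
  have hr := (nrm3_sp_fst_pos hp hq1).ne'
  have hE' : 2 * γ * p.1 0 - nrm3 (sp p.1) * (pivec p ⬝ᵥ pivec p)
      = -2 * Een γ p * nrm3 (sp p.1) := by
    rw [Een_eq hp]; field_simp; ring
  rw [hE', nuLS, div_pow, Real.sq_sqrt (by linarith)]
  field_simp [hE.ne]

theorem alphaLS_dotProduct_self (hp : p ∈ TS3) (hq0 : p.1 0 ≠ 0) (hq1 : p.1 0 ^ 2 < 1)
    (hγ : 0 < γ) (hE : Een γ p < 0) : alphaLS γ p ⬝ᵥ alphaLS γ p = 1 := by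
  have hν := nuLS_sq_mul_eq hp hq1 hE
  have hr := (nrm3_sp_fst_pos hp hq1).ne'
  have := (nuLS_pos hγ hE).ne'
  rw [alphaLS, finCons_dotProduct_finCons]
  simp only [dotProduct_sub, sub_dotProduct, dotProduct_smul, smul_dotProduct, smul_eq_mul,
    dotProduct_comm (pivec p) (sp p.1)]
  rw [← nrm3_sq (sp p.1)]
  field_simp
  linear_combination -(sp p.1 ⬝ᵥ pivec p) ^ 2 * hν

theorem betaLS_dotProduct_self (hp : p ∈ TS3) (hq0 : p.1 0 ≠ 0) (hq1 : p.1 0 ^ 2 < 1)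
    (hγ : 0 < γ) (hE : Een γ p < 0) : betaLS γ p ⬝ᵥ betaLS γ p = 1 := by
  have hν := nuLS_sq_mul_eq hp hq1 hE
  have := (nuLS_pos hγ hE).ne'
  rw [betaLS, finCons_dotProduct_finCons]
  simp only [dotProduct_smul, smul_dotProduct, smul_eq_mul]
  field_simp
  linear_combination -(nrm3 (sp p.1) * (pivec p ⬝ᵥ pivec p)) * hν

theorem alphaLS_dotProduct_betaLS (hr : nrm3 (sp p.1) ≠ 0) :
    alphaLS γ p ⬝ᵥ betaLS γ p = 0 := by
  rw [alphaLS, betaLS, finCons_dotProduct_finCons]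
  simp only [sub_dotProduct, dotProduct_smul, smul_dotProduct, smul_eq_mul]
  field_simp
  ring

theorem PhiLS_snd_dotProduct_self (hp : p ∈ TS3) (hq0 : p.1 0 ≠ 0) (hq1 : p.1 0 ^ 2 < 1)
    (hγ : 0 < γ) (hE : Een γ p < 0) :
    (PhiLS γ p).2 ⬝ᵥ (PhiLS γ p).2 = nuLS γ p ^ 2 := by
  simp only [PhiLS, smul_dotProduct, dotProduct_smul, add_dotProduct, dotProduct_add,
    smul_eq_mul, dotProduct_comm (betaLS γ p) (alphaLS γ p),
    alphaLS_dotProduct_self hp hq0 hq1 hγ hE, betaLS_dotProduct_self hp hq0 hq1 hγ hE,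
    alphaLS_dotProduct_betaLS (nrm3_sp_fst_pos hp hq1).ne']
  linear_combination nuLS γ p ^ 2 * Real.sin_sq_add_cos_sq (phiLS γ p)

theorem phiLS_rate_sub_frequency (hp : p ∈ TS3) (hq0 : p.1 0 ≠ 0) (hq1 : p.1 0 ^ 2 < 1)
    (hγ : 0 < γ) (hE : Een γ p < 0) :
    (pivec p ⬝ᵥ pivec p - γ * p.1 0 / nrm3 (sp p.1)) / (nuLS γ p * p.1 0 ^ 2)
      - γ / (nuLS γ p * p.1 0 * nrm3 (sp p.1)) = -(γ ^ 2 / (nuLS γ p ^ 3 * p.1 0 ^ 2)) := by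
  have hr := (nrm3_sp_fst_pos hp hq1).ne'
  have hν := (nuLS_pos hγ hE).ne'
  field_simp
  linear_combination -(nuLS_sq_mul_eq hp hq1 hE)

end PhaseSpace

section Trajectory

variable {γ : ℝ} {q v : ℝ → Fin 4 → ℝ} {t : ℝ}

theorem hasDerivAt_mu (hq : HasDerivAt q (v t) t)
    (hv : HasDerivAt v (keplerRHS γ (q t) (v t)) t) :
    HasDerivAt (fun s => mu (q s, v s)) 0 t :=
  (hq.sp.crossProduct hv.sp).congr_deriv (by simp [sp_keplerRHS, cross_self])

theorem hasDerivAt_Hham (hq : HasDerivAt q (v t) t)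
    (hv : HasDerivAt v (keplerRHS γ (q t) (v t)) t) (hqv : q t ⬝ᵥ v t = 0)
    (hq1 : q t 0 ^ 2 < 1) :
    HasDerivAt (fun s => Hham γ (q s, v s)) 0 t := by
  have hkin := (hv.dotProduct hv).const_mul (1 / 2 : ℝ)
  have hpot := ((hasDerivAt_div_sqrt_one_sub_sq hq1).comp t (hasDerivAt_pi.1 hq 0)).const_mul γ
  have hH : (fun s => Hham γ (q s, v s))
      = fun s => 1 / 2 * (v s ⬝ᵥ v s) - γ * (q s 0 / √(1 - q s 0 ^ 2)) := by
    funext s; simp only [Hham, mul_div_assoc]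
  rw [hH]
  refine (hkin.sub hpot).congr_deriv ?_
  rw [dotProduct_comm _ (v t), keplerRHS]
  simp only [dotProduct_sub, dotProduct_smul, dotProduct_e0, smul_eq_mul,
    dotProduct_comm (v t) (q t), hqv]
  field_simp
  ring

theorem hasDerivAt_Een (hq : HasDerivAt q (v t) t)
    (hv : HasDerivAt v (keplerRHS γ (q t) (v t)) t) (hqv : q t ⬝ᵥ v t = 0)
    (hq1 : q t 0 ^ 2 < 1) :
    HasDerivAt (fun s => Een γ (q s, v s)) 0 t := by
  have hμ := hasDerivAt_mu hq hv
  exact ((hasDerivAt_Hham hq hv hqv hq1).sub ((hμ.dotProduct hμ).div_const 2)).congr_deriv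
    (by simp)

theorem hasDerivAt_nuLS (hq : HasDerivAt q (v t) t)
    (hv : HasDerivAt v (keplerRHS γ (q t) (v t)) t) (hqv : q t ⬝ᵥ v t = 0)
    (hq1 : q t 0 ^ 2 < 1) (hE : Een γ (q t, v t) < 0) :
    HasDerivAt (fun s => nuLS γ (q s, v s)) 0 t := by
  have hpos : 0 < -2 * Een γ (q t, v t) := by linarith
  have h := ((hasDerivAt_Een hq hv hqv hq1).const_mul (-2)).sqrt hpos.ne'
  exact ((hasDerivAt_const t γ).div h (Real.sqrt_pos.2 hpos).ne').congr_deriv (by simp)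

theorem hasDerivAt_pivec (hq : HasDerivAt q (v t) t)
    (hv : HasDerivAt v (keplerRHS γ (q t) (v t)) t) :
    HasDerivAt (fun s => pivec (q s, v s))
      (-(γ / (1 - q t 0 ^ 2) ^ ((3 : ℝ) / 2)) • sp (q t)) t := by
  have h := ((hasDerivAt_pi.1 hq 0).smul hv.sp).sub ((hasDerivAt_pi.1 hv 0).smul hq.sp)
  refine h.congr_deriv ?_
  rw [sp_keplerRHS, keplerRHS_zero]
  ext i
  simp only [Pi.add_apply, Pi.sub_apply, Pi.smul_apply, smul_eq_mul]
  ring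

theorem hasDerivAt_nrm3_sp (hq : HasDerivAt q (v t) t) (hr : nrm3 (sp (q t)) ≠ 0) :
    HasDerivAt (fun s => nrm3 (sp (q s))) (sp (q t) ⬝ᵥ sp (v t) / nrm3 (sp (q t))) t := by
  have hQQ : sp (q t) ⬝ᵥ sp (q t) ≠ 0 := by rwa [← nrm3_sq, pow_ne_zero_iff two_ne_zero]
  refine ((hq.sp.dotProduct hq.sp).sqrt hQQ).congr_deriv ?_
  rw [dotProduct_comm (sp (v t))]
  unfold nrm3
  ring

theorem hasDerivAt_sp_dotProduct_pivec (hq : HasDerivAt q (v t) t)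
    (hv : HasDerivAt v (keplerRHS γ (q t) (v t)) t) (hp : (q t, v t) ∈ TS3) :
    HasDerivAt (fun s => sp (q s) ⬝ᵥ pivec (q s, v s))
      (q t 0 * (v t ⬝ᵥ v t) - γ / nrm3 (sp (q t))) t := by
  refine (hq.sp.dotProduct (hasDerivAt_pivec hq hv)).congr_deriv ?_
  rw [sp_snd_dotProduct_pivec hp, dotProduct_smul, ← nrm3_sq, one_sub_sq_rpow_three_halves_eq_sqrt_pow hp,
    smul_eq_mul]
  field_simp
  ring

theorem hasDerivAt_phiLS (hq : HasDerivAt q (v t) t)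
    (hv : HasDerivAt v (keplerRHS γ (q t) (v t)) t) (hp : (q t, v t) ∈ TS3)
    (hq0 : q t 0 ≠ 0) (hq1 : q t 0 ^ 2 < 1) (hγ : 0 < γ) (hE : Een γ (q t, v t) < 0) :
    HasDerivAt (fun s => phiLS γ (q s, v s))
      ((pivec (q t, v t) ⬝ᵥ pivec (q t, v t) - γ * q t 0 / nrm3 (sp (q t)))
        / (nuLS γ (q t, v t) * q t 0 ^ 2)) t := by
  have hν := (nuLS_pos hγ hE).ne'
  have h := (hasDerivAt_sp_dotProduct_pivec hq hv hp).div
    ((hasDerivAt_nuLS hq hv hp.2 hq1 hE).mul (hasDerivAt_pi.1 hq 0)) (mul_ne_zero hν hq0)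
  refine h.congr_deriv ?_
  simp only [Pi.mul_apply, sp_dotProduct_pivec hp, pivec_dotProduct_pivec hp]
  field_simp
  ring

theorem hasDerivAt_alphaLS (hq : HasDerivAt q (v t) t)
    (hv : HasDerivAt v (keplerRHS γ (q t) (v t)) t) (hp : (q t, v t) ∈ TS3)
    (hq0 : q t 0 ≠ 0) (hq1 : q t 0 ^ 2 < 1) (hγ : 0 < γ) (hE : Een γ (q t, v t) < 0) :
    HasDerivAt (fun s => alphaLS γ (q s, v s))
      ((γ / (nuLS γ (q t, v t) * q t 0 * nrm3 (sp (q t)))) • betaLS γ (q t, v t)) t := by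
  have hr := (nrm3_sp_fst_pos hp hq1).ne'
  have hν := (nuLS_pos hγ hE).ne'
  have hνeq := nuLS_sq_mul_eq hp hq1 hE
  have hr2 : nrm3 (sp (q t)) ^ 2 = 1 - q t 0 ^ 2 := by rw [nrm3_sq]; exact sp_dotProduct_sp_fst hp
  rw [pivec_dotProduct_pivec hp] at hνeq
  dsimp only at hr hνeq
  have hvec := ((hasDerivAt_nrm3_sp hq hr).inv hr).smul hq.sp |>.sub
    (((hasDerivAt_sp_dotProduct_pivec hq hv hp).div (hasDerivAt_pi.1 hq 0 |>.const_mul γ)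
      (mul_ne_zero hγ.ne' hq0)).smul (hasDerivAt_pivec hq hv))
  refine ((hasDerivAt_phiLS hq hv hp hq0 hq1 hγ hE).finCons hvec).congr_deriv ?_
  rw [betaLS, smul_finCons]
  simp only [Pi.inv_apply, Pi.div_apply, one_sub_sq_rpow_three_halves_eq_sqrt_pow hp, sp_dotProduct_pivec hp,
    sp_dotProduct_sp_snd hp]
  rw [sp_snd_eq_smul_pivec_add (p := (q t, v t)) hq0]
  congr 1
  · field_simp
  · match_scalars
    · field_simp
      linear_combination hνeq
    · field_simp
      linear_combination v t 0 * hr2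

theorem hasDerivAt_betaLS (hq : HasDerivAt q (v t) t)
    (hv : HasDerivAt v (keplerRHS γ (q t) (v t)) t) (hp : (q t, v t) ∈ TS3)
    (hq0 : q t 0 ≠ 0) (hq1 : q t 0 ^ 2 < 1) (hγ : 0 < γ) (hE : Een γ (q t, v t) < 0) :
    HasDerivAt (fun s => betaLS γ (q s, v s))
      ((-(γ / (nuLS γ (q t, v t) * q t 0 * nrm3 (sp (q t))))) • alphaLS γ (q t, v t)) t := by
  have hr := (nrm3_sp_fst_pos hp hq1).ne'
  have hν := (nuLS_pos hγ hE).ne'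
  have hνeq := nuLS_sq_mul_eq hp hq1 hE
  have hr2 : nrm3 (sp (q t)) ^ 2 = 1 - q t 0 ^ 2 := by rw [nrm3_sq]; exact sp_dotProduct_sp_fst hp
  dsimp only at hr hνeq
  have hq0' := hasDerivAt_pi.1 hq 0
  have hr' := hasDerivAt_nrm3_sp hq hr
  have hP := hasDerivAt_pivec hq hv
  have h0 := ((hr'.div (hq0'.const_mul γ) (mul_ne_zero hγ.ne' hq0)).mul
    (hP.dotProduct hP)).sub_const 1
  have hvec := (hr'.div ((hasDerivAt_nuLS hq hv hp.2 hq1 hE).mul hq0') (mul_ne_zero hν hq0)).smul hP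
  refine (h0.finCons hvec).congr_deriv ?_
  rw [alphaLS, smul_finCons]
  simp only [Pi.mul_apply, Pi.div_apply, one_sub_sq_rpow_three_halves_eq_sqrt_pow hp, dotProduct_smul, smul_dotProduct,
    sp_dotProduct_pivec hp, dotProduct_comm (pivec (q t, v t)) (sp (q t)), sp_dotProduct_sp_snd hp]
  congr 1
  · simp only [smul_eq_mul]
    field_simp
    linear_combination v t 0 * hνeq - v t 0 * nuLS γ (q t, v t) ^ 2 * nrm3 (sp (q t))
      * (pivec (q t, v t) ⬝ᵥ pivec (q t, v t)) * hr2
  · match_scalars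
    · field_simp
    · field_simp
      linear_combination -(v t 0 * nuLS γ (q t, v t)) * hr2

end Trajectory

theorem LS_map_conjugates_up_to_time_rescaling_general (γ : ℝ) (hγ : 0 < γ) (I : Set ℝ)
    (q v : ℝ → Fin 4 → ℝ)
    (hq : ∀ t ∈ I, HasDerivAt q (v t) t)
    (hv : ∀ t ∈ I, HasDerivAt v (keplerRHS γ (q t) (v t)) t)
    (hTS : ∀ t ∈ I, (q t, v t) ∈ TS3)
    (hq0 : ∀ t ∈ I, 0 < q t 0 ∧ q t 0 < 1)
    (hE : ∀ t ∈ I, Een γ (q t, v t) < 0) :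
    ∀ t ∈ I,
      HasDerivAt (fun s => (PhiLS γ (q s, v s)).1)
        ((1 / q t 0 ^ 2) •
          ((γ ^ 2 / ((PhiLS γ (q t, v t)).2 ⬝ᵥ (PhiLS γ (q t, v t)).2) ^ 2) •
            (PhiLS γ (q t, v t)).2)) t ∧
      HasDerivAt (fun s => (PhiLS γ (q s, v s)).2)
        ((1 / q t 0 ^ 2) •
          (-(γ ^ 2 / ((PhiLS γ (q t, v t)).2 ⬝ᵥ (PhiLS γ (q t, v t)).2)) •
            (PhiLS γ (q t, v t)).1)) t := by
  intro t ht
  have hq0' : q t 0 ≠ 0 := (hq0 t ht).1.ne'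
  have hq1 : q t 0 ^ 2 < 1 := by nlinarith [hq0 t ht]
  have hφ := hasDerivAt_phiLS (hq t ht) (hv t ht) (hTS t ht) hq0' hq1 hγ (hE t ht)
  have hα := hasDerivAt_alphaLS (hq t ht) (hv t ht) (hTS t ht) hq0' hq1 hγ (hE t ht)
  have hβ := hasDerivAt_betaLS (hq t ht) (hv t ht) (hTS t ht) hq0' hq1 hγ (hE t ht)
  have hΩ := phiLS_rate_sub_frequency (hTS t ht) hq0' hq1 hγ (hE t ht)
  dsimp only at hΩ
  rw [PhiLS_snd_dotProduct_self (hTS t ht) hq0' hq1 hγ (hE t ht)]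
  constructor
  · refine (hφ.sin_smul_add_cos_smul hα hβ).congr_deriv ?_
    rw [hΩ, PhiLS]
    match_scalars <;> field_simp
  · refine ((hasDerivAt_nuLS (hq t ht) (hv t ht) (hTS t ht).2 hq1 (hE t ht)).smul
      (hφ.neg_cos_smul_add_sin_smul hα hβ)).congr_deriv ?_
    rw [hΩ, PhiLS]
    match_scalars <;> field_simp <;> ring

theorem LS_map_conjugates_up_to_time_rescaling (γ : ℝ) (hγ : 0 < γ) (I : Set ℝ) (hI : Convex ℝ I)
    (q v : ℝ → Fin 4 → ℝ)
    (hq : ∀ t ∈ I, HasDerivAt q (v t) t)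
    (hv : ∀ t ∈ I, HasDerivAt v (keplerRHS γ (q t) (v t)) t)
    (hTS : ∀ t ∈ I, (q t, v t) ∈ TS3)
    (hq0 : ∀ t ∈ I, 0 < q t 0 ∧ q t 0 < 1)
    (hqnz : ∀ t ∈ I, sp (q t) ≠ 0)
    (hE : ∀ t ∈ I, Een γ (q t, v t) < 0) :
    ∀ t ∈ I,
      HasDerivAt (fun s => (PhiLS γ (q s, v s)).1)
        ((1 / q t 0 ^ 2) •
          ((γ ^ 2 / ((PhiLS γ (q t, v t)).2 ⬝ᵥ (PhiLS γ (q t, v t)).2) ^ 2) •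
            (PhiLS γ (q t, v t)).2)) t ∧
      HasDerivAt (fun s => (PhiLS γ (q s, v s)).2)
        ((1 / q t 0 ^ 2) •
          (-(γ ^ 2 / ((PhiLS γ (q t, v t)).2 ⬝ᵥ (PhiLS γ (q t, v t)).2)) •
            (PhiLS γ (q t, v t)).1)) t :=
  LS_map_conjugates_up_to_time_rescaling_general γ hγ I q v hq hv hTS hq0 hE
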